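/- Let x_1,…,x_m be i.i.d. random vectors in ℝ^n on a probability space, with mean zero, covariance matrix C = E[x x^T], and E[‖x‖₂⁴] < ∞. Let Ĉ = (1/m) Σ_{p=1}^m x_p x_p^T with eigenvalues λ̂_1(ω) ≥ … ≥ λ̂_n(ω), let u_i be a unit eigenvector of C with eigenvalue λ_i > 0, and set k_i = (E[‖x x^T u_i‖₂²] − λ_i²)^{1/2}. Then for every t > 0, P( min_{1≤j≤n} |λ̂_j − λ_i| ≥ t·λ_i ) ≤ (1/m)·(k_i/(λ_i·t))². -/

import Mathlib

open Matrix Finset MeasureTheory ProbabilityTheory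

/-!
If `Ĉ` has an orthonormal eigenbasis, then for any unit vector `u` the distance from `λ` to the
spectrum of `Ĉ` is at most the residual `‖Ĉ u - λ u‖₂`. Here `Ĉ u_i` is the sample mean of the
i.i.d. vectors `x_p x_pᵀ u_i`, whose mean is `C u_i = λ_i u_i` and whose total variance is `k_i²`;
so `E ‖Ĉ u_i - λ_i u_i‖₂² = k_i² / m`, and Markov's inequality at level `(t λ_i)²` concludes.
-/

namespace Matrix

theorem sum_sq_mulVec_of_transpose_mul_self {ι κ : Type*} [Fintype ι] [DecidableEq ι] [Fintype κ]
    {V : Matrix κ ι ℝ} (hV : Vᵀ * V = 1) (w : ι → ℝ) :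
    ∑ k, (V *ᵥ w) k ^ 2 = ∑ a, w a ^ 2 := by
  have h : (V *ᵥ w) ⬝ᵥ (V *ᵥ w) = w ⬝ᵥ w := by
    rw [dotProduct_mulVec, ← vecMul_transpose, vecMul_vecMul, hV, vecMul_one]
  simpa only [dotProduct, sq] using h

theorem inf'_abs_sub_sq_le_sum_sq_mulVec_sub {ι : Type*} [Fintype ι] [DecidableEq ι]
    (hne : (univ : Finset ι).Nonempty) {A : Matrix ι ι ℝ} {v : ι → ι → ℝ} {lam : ι → ℝ}
    (hortho : ∀ k l, ∑ a, v k a * v l a = if k = l then 1 else 0)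
    (heig : ∀ k, A *ᵥ v k = lam k • v k) {u : ι → ℝ} (hu : ∑ a, u a ^ 2 = 1) (c : ℝ) :
    (univ.inf' hne fun k => |lam k - c|) ^ 2 ≤ ∑ a, (A *ᵥ u - c • u) a ^ 2 := by
  set V : Matrix ι ι ℝ := Matrix.of v
  have hVVt : V * Vᵀ = 1 := by
    ext k l
    simpa [V, mul_apply, one_apply] using hortho k l
  have hVtV : Vᵀ * V = 1 := mul_eq_one_comm.mp hVVt
  have hAVt : A * Vᵀ = Vᵀ * diagonal lam := by
    ext a k
    rw [mul_diagonal]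
    simpa [V, mul_comm, mul_apply, mulVec, dotProduct] using congrFun (heig k) a
  have hVA : V * A = diagonal lam * V := by
    calc V * A = V * (A * Vᵀ) * V := by
          rw [Matrix.mul_assoc, Matrix.mul_assoc, hVtV, Matrix.mul_one]
      _ = diagonal lam * V := by rw [hAVt, ← Matrix.mul_assoc, hVVt, Matrix.one_mul]
  have hres : ∀ k, (V *ᵥ (A *ᵥ u - c • u)) k = (lam k - c) * (V *ᵥ u) k := fun k => by
    rw [mulVec_sub, mulVec_mulVec, hVA, ← mulVec_mulVec, mulVec_smul, Pi.sub_apply,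
      mulVec_diagonal, Pi.smul_apply, smul_eq_mul]
    ring
  set M := univ.inf' hne fun k => |lam k - c|
  have hM : ∀ k, M ≤ |lam k - c| := fun k => inf'_le _ (mem_univ k)
  have hM₀ : 0 ≤ M := le_inf' hne _ fun k _ => abs_nonneg _
  calc M ^ 2 = ∑ k, M ^ 2 * (V *ᵥ u) k ^ 2 := by
        rw [← mul_sum, sum_sq_mulVec_of_transpose_mul_self hVtV, hu, mul_one]
    _ ≤ ∑ k, ((lam k - c) * (V *ᵥ u) k) ^ 2 := by
        refine sum_le_sum fun k _ => ?_
        rw [mul_pow, ← sq_abs (lam k - c)]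
        gcongr
        exact hM k
    _ = ∑ a, (A *ᵥ u - c • u) a ^ 2 := by
        simp only [← hres, sum_sq_mulVec_of_transpose_mul_self hVtV]

end Matrix

section SampleMean

noncomputable def sampleMean {Ω ι : Type*} [Fintype ι] (Y : ι → Ω → ℝ) (ω : Ω) : ℝ :=
  (Fintype.card ι : ℝ)⁻¹ * ∑ i, Y i ω

variable {Ω ι : Type*} [MeasurableSpace Ω] {μ : Measure Ω} [Fintype ι]
  {Y : ι → Ω → ℝ} {i₀ : ι}

theorem integral_sampleMean (hY : Integrable (Y i₀) μ)
    (hident : ∀ i, IdentDistrib (Y i) (Y i₀) μ μ) :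
    ∫ ω, sampleMean Y ω ∂μ = μ[Y i₀] := by
  have hcard : (Fintype.card ι : ℝ) ≠ 0 := Nat.cast_ne_zero.mpr (Fintype.card_pos_iff.mpr ⟨i₀⟩).ne'
  unfold sampleMean
  rw [integral_const_mul, integral_finsetSum _ fun i _ => (hident i).integrable_iff.mpr hY]
  simp only [fun i => (hident i).integral_eq, sum_const, card_univ, nsmul_eq_mul]
  field_simp

theorem variance_sampleMean (hY : MemLp (Y i₀) 2 μ)
    (hindep : Pairwise fun i j => IndepFun (Y i) (Y j) μ)
    (hident : ∀ i, IdentDistrib (Y i) (Y i₀) μ μ) :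
    Var[sampleMean Y; μ] = (Fintype.card ι : ℝ)⁻¹ * Var[Y i₀; μ] := by
  have hcard : (Fintype.card ι : ℝ) ≠ 0 := Nat.cast_ne_zero.mpr (Fintype.card_pos_iff.mpr ⟨i₀⟩).ne'
  have hsum : Var[fun ω => ∑ i, Y i ω; μ] = ∑ i, Var[Y i; μ] := by
    simpa only [← sum_fn] using IndepFun.variance_sum
      (fun i _ => (hident i).memLp_iff.mpr hY) fun i _ j _ hij => hindep hij
  unfold sampleMean
  rw [variance_const_mul, hsum]
  simp only [fun i => (hident i).variance_eq, sum_const, card_univ, nsmul_eq_mul]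
  field_simp

theorem integral_sq_sampleMean_sub [IsFiniteMeasure μ] (hY : MemLp (Y i₀) 2 μ)
    (hindep : Pairwise fun i j => IndepFun (Y i) (Y j) μ)
    (hident : ∀ i, IdentDistrib (Y i) (Y i₀) μ μ) :
    ∫ ω, (sampleMean Y ω - μ[Y i₀]) ^ 2 ∂μ = (Fintype.card ι : ℝ)⁻¹ * Var[Y i₀; μ] := by
  have hmeas : AEMeasurable (sampleMean Y) μ :=
    (Finset.aemeasurable_fun_sum _ fun i _ => (hident i).aemeasurable_fst).const_mul _
  rw [← variance_sampleMean hY hindep hident, variance_eq_integral hmeas,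
    integral_sampleMean (hY.integrable one_le_two) hident]

theorem measureReal_sum_sq_sampleMean_sub_ge_le [IsFiniteMeasure μ] {κ : Type*} [Fintype κ]
    {X : ι → Ω → κ → ℝ} (hX : ∀ a, MemLp (fun ω => X i₀ ω a) 2 μ) (hindep : iIndepFun X μ)
    (hident : ∀ i, IdentDistrib (X i) (X i₀) μ μ) {ε : ℝ} (hε : 0 < ε) :
    μ.real {ω | ε ≤ ∑ a, (sampleMean (fun i ω => X i ω a) ω - μ[fun ω => X i₀ ω a]) ^ 2}
      ≤ (Fintype.card ι : ℝ)⁻¹ * (∑ a, Var[fun ω => X i₀ ω a; μ]) / ε := by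
  have hident' : ∀ a i, IdentDistrib (fun ω => X i ω a) (fun ω => X i₀ ω a) μ μ :=
    fun a i => (hident i).comp (measurable_pi_apply a)
  have hindep' : ∀ a, Pairwise fun i j => IndepFun (fun ω => X i ω a) (fun ω => X j ω a) μ :=
    fun a i j hij => (hindep.indepFun hij).comp (measurable_pi_apply a) (measurable_pi_apply a)
  have hint : ∀ a, Integrable
      (fun ω => (sampleMean (fun i ω => X i ω a) ω - μ[fun ω => X i₀ ω a]) ^ 2) μ := by
    intro a
    exact (((memLp_finsetSum _ fun i _ => (hident' a i).memLp_iff.mpr (hX a)).const_mul _).sub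
      (memLp_const _)).integrable_sq
  rw [le_div_iff₀ hε, mul_comm]
  refine (mul_meas_ge_le_integral_of_nonneg (ae_of_all _ fun ω => by positivity)
    (integrable_finsetSum _ fun a _ => hint a) ε).trans_eq ?_
  rw [integral_finsetSum _ fun a _ => hint a, mul_sum]
  exact sum_congr rfl fun a _ => integral_sq_sampleMean_sub (hX a) (hindep' a) (hident' a)

end SampleMean

theorem sum_variance_apply_eq {Ω κ : Type*} [MeasurableSpace Ω] {μ : Measure Ω}
    [IsProbabilityMeasure μ] [Fintype κ] {Y : Ω → κ → ℝ} (hY : ∀ a, MemLp (fun ω => Y ω a) 2 μ) :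
    ∑ a, Var[fun ω => Y ω a; μ] = ∫ ω, ∑ a, Y ω a ^ 2 ∂μ - ∑ a, μ[fun ω => Y ω a] ^ 2 := by
  simp only [fun a => variance_eq_sub (hY a), sum_sub_distrib, Pi.pow_apply,
    integral_finsetSum _ fun a _ => (hY a).integrable_sq]

theorem abs_mul_le_sum_sq {κ : Type*} [Fintype κ] (v : κ → ℝ) (a b : κ) :
    |v a * v b| ≤ ∑ c, v c ^ 2 := by
  have ha := single_le_sum (f := fun c => v c ^ 2) (fun _ _ => sq_nonneg _) (mem_univ a)
  have hb := single_le_sum (f := fun c => v c ^ 2) (fun _ _ => sq_nonneg _) (mem_univ b)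
  rw [abs_mul]
  nlinarith [abs_nonneg (v a), abs_nonneg (v b), sq_abs (v a), sq_abs (v b),
    sq_nonneg (|v a| - |v b|)]

theorem vecMulVec_self_mulVec_apply {κ : Type*} [Fintype κ] (v u : κ → ℝ) (a : κ) :
    (vecMulVec v v *ᵥ u) a = ∑ b, v a * v b * u b := by
  simp [mulVec, dotProduct, vecMulVec_apply]

theorem measurable_vecMulVec_self_mulVec {κ : Type*} [Fintype κ] (u : κ → ℝ) :
    Measurable fun v : κ → ℝ => vecMulVec v v *ᵥ u :=
  measurable_pi_lambda _ fun a => by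
    simp only [vecMulVec_self_mulVec_apply]
    fun_prop

section FourthMoment

variable {Ω κ : Type*} [MeasurableSpace Ω] {μ : Measure Ω} [Fintype κ] {X : Ω → κ → ℝ}

theorem memLp_two_mul_apply_of_integrable_sq_sum_sq (hX : Measurable X)
    (h4 : Integrable (fun ω => (∑ a, X ω a ^ 2) ^ 2) μ) (a b : κ) :
    MemLp (fun ω => X ω a * X ω b) 2 μ := by
  have hQ : Measurable fun ω => ∑ c, X ω c ^ 2 := by fun_prop
  refine ((memLp_two_iff_integrable_sq hQ.aestronglyMeasurable).mpr h4).of_le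
    (by fun_prop) (ae_of_all _ fun ω => ?_)
  rw [Real.norm_eq_abs, Real.norm_of_nonneg (sum_nonneg fun c _ => sq_nonneg _)]
  exact abs_mul_le_sum_sq (X ω) a b

theorem memLp_two_vecMulVec_self_mulVec_apply (hX : Measurable X)
    (h4 : Integrable (fun ω => (∑ a, X ω a ^ 2) ^ 2) μ) (u : κ → ℝ) (a : κ) :
    MemLp (fun ω => (vecMulVec (X ω) (X ω) *ᵥ u) a) 2 μ := by
  simp only [vecMulVec_self_mulVec_apply]
  exact memLp_finsetSum _ fun b _ =>
    (memLp_two_mul_apply_of_integrable_sq_sum_sq hX h4 a b).mul_const _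

theorem integral_vecMulVec_self_mulVec_apply [IsFiniteMeasure μ] (hX : Measurable X)
    (h4 : Integrable (fun ω => (∑ a, X ω a ^ 2) ^ 2) μ) {C : Matrix κ κ ℝ}
    (hC : ∀ a b, C a b = ∫ ω, X ω a * X ω b ∂μ) (u : κ → ℝ) (a : κ) :
    ∫ ω, (vecMulVec (X ω) (X ω) *ᵥ u) a ∂μ = (C *ᵥ u) a := by
  simp only [vecMulVec_self_mulVec_apply]
  rw [integral_finsetSum _ fun b _ =>
    ((memLp_two_mul_apply_of_integrable_sq_sum_sq hX h4 a b).integrable one_le_two).mul_const _]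
  simp only [integral_mul_const, ← hC, mulVec, dotProduct]

end FourthMoment

theorem eigenvalue_concentration_general {Ω : Type*} [MeasurableSpace Ω]
    (μ : Measure Ω) [IsProbabilityMeasure μ]
    {n m : ℕ} (hm : 0 < m) (hn : 0 < n)
    (x : Fin m → Ω → Fin n → ℝ)
    (hmeas : ∀ p, Measurable (x p))
    (hindep : iIndepFun x μ)
    (hident : ∀ p, IdentDistrib (x p) (x ⟨0, hm⟩) μ μ)
    (C : Matrix (Fin n) (Fin n) ℝ)
    (hC : ∀ a b, C a b = ∫ ω, x ⟨0, hm⟩ ω a * x ⟨0, hm⟩ ω b ∂μ)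
    (hL4 : Integrable (fun ω => (∑ a, x ⟨0, hm⟩ ω a ^ 2) ^ 2) μ)
    (Chat : Ω → Matrix (Fin n) (Fin n) ℝ)
    (hChat : ∀ ω, Chat ω = (m : ℝ)⁻¹ • ∑ p, vecMulVec (x p ω) (x p ω))
    (uhat : Fin n → Ω → Fin n → ℝ) (lamhat : Fin n → Ω → ℝ)
    (huhatortho : ∀ ω k l, ∑ a, uhat k ω a * uhat l ω a = if k = l then 1 else 0)
    (huhateig : ∀ ω k, (Chat ω).mulVec (uhat k ω) = lamhat k ω • uhat k ω)
    (ui : Fin n → ℝ) (lami : ℝ) (hlami : 0 < lami)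
    (hui : ∑ a, ui a ^ 2 = 1) (hCui : C.mulVec ui = lami • ui)
    (ki : ℝ)
    (hki : ki = Real.sqrt
      ((∫ ω, ∑ a, ((vecMulVec (x ⟨0, hm⟩ ω) (x ⟨0, hm⟩ ω)).mulVec ui a) ^ 2 ∂μ)
        - lami ^ 2))
    (t : ℝ) (ht : 0 < t) :
    (μ {ω | t * lami ≤ Finset.univ.inf' (Finset.univ_nonempty_iff.mpr ⟨⟨0, hn⟩⟩)
              (fun k => |lamhat k ω - lami|)}).toReal
      ≤ (m : ℝ)⁻¹ * (ki / (lami * t)) ^ 2 := by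
  set p₀ : Fin m := ⟨0, hm⟩
  set Y : Fin m → Ω → Fin n → ℝ := fun p ω => vecMulVec (x p ω) (x p ω) *ᵥ ui
  have hY : ∀ a, MemLp (fun ω => Y p₀ ω a) 2 μ :=
    memLp_two_vecMulVec_self_mulVec_apply (hmeas p₀) hL4 ui
  have hYmean : ∀ a, μ[fun ω => Y p₀ ω a] = lami * ui a := fun a => by
    rw [integral_vecMulVec_self_mulVec_apply (hmeas p₀) hL4 hC, hCui, Pi.smul_apply, smul_eq_mul]
  have hvar : ∑ a, Var[fun ω => Y p₀ ω a; μ] = ki ^ 2 := by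
    have hsum := sum_variance_apply_eq hY
    simp only [hYmean, mul_pow, ← mul_sum, hui, mul_one] at hsum
    rw [hki, ← hsum, Real.sq_sqrt (sum_nonneg fun a _ => variance_nonneg _ _)]
  have hresid : ∀ ω, ∑ a, (Chat ω *ᵥ ui - lami • ui) a ^ 2
      = ∑ a, (sampleMean (fun p ω => Y p ω a) ω - μ[fun ω => Y p₀ ω a]) ^ 2 := fun ω => by
    simp only [sampleMean, Fintype.card_fin, hChat, smul_mulVec, sum_mulVec, hYmean, Pi.sub_apply,
      Pi.smul_apply, smul_eq_mul, Finset.sum_apply, Y]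
  have hYindep : iIndepFun Y μ :=
    hindep.comp (fun _ v => vecMulVec v v *ᵥ ui) fun _ => measurable_vecMulVec_self_mulVec ui
  have hYident : ∀ p, IdentDistrib (Y p) (Y p₀) μ μ := fun p =>
    (hident p).comp (measurable_vecMulVec_self_mulVec ui)
  calc (μ {ω | t * lami ≤ univ.inf' _ fun k => |lamhat k ω - lami|}).toReal
      ≤ μ.real {ω | (t * lami) ^ 2
          ≤ ∑ a, (sampleMean (fun p ω => Y p ω a) ω - μ[fun ω => Y p₀ ω a]) ^ 2} := by
        refine measureReal_mono fun ω hω => ?_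
        have h := inf'_abs_sub_sq_le_sum_sq_mulVec_sub (univ_nonempty_iff.mpr ⟨⟨0, hn⟩⟩)
          (huhatortho ω) (huhateig ω) hui lami
        exact (pow_le_pow_left₀ (by positivity) hω 2).trans (hresid ω ▸ h)
    _ ≤ (m : ℝ)⁻¹ * ki ^ 2 / (t * lami) ^ 2 := by
        simpa only [hvar, Fintype.card_fin] using
          measureReal_sum_sq_sampleMean_sub_ge_le hY hYindep hYident (by positivity)
    _ = (m : ℝ)⁻¹ * (ki / (lami * t)) ^ 2 := by ring

/-- (Theorem 4 of the paper / relative eigenvalue error.) For i.i.d.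
mean-zero samples with covariance `C`, sample covariance `Ĉ(ω)` with eigenvalues
`λ̂_1(ω) ≥ … ≥ λ̂_n(ω)` (given by a measurable orthonormal eigendecomposition), a unit
eigenvector `u_i` of `C` with eigenvalue `λ_i > 0`, and
`k_i = (E[‖x xᵀ u_i‖₂²] - λ_i²)^{1/2}`: for every `t > 0`,
`P(min_j |λ̂_j - λ_i| ≥ t λ_i) ≤ (1/m) (k_i / (λ_i t))²`. -/
theorem eigenvalue_concentration {Ω : Type*} [MeasurableSpace Ω]
    (μ : Measure Ω) [IsProbabilityMeasure μ]
    {n m : ℕ} (hm : 0 < m) (hn : 0 < n)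
    (x : Fin m → Ω → Fin n → ℝ)
    (hmeas : ∀ p, Measurable (x p))
    (hindep : iIndepFun x μ)
    (hident : ∀ p, IdentDistrib (x p) (x ⟨0, hm⟩) μ μ)
    (hmean : ∀ a, ∫ ω, x ⟨0, hm⟩ ω a ∂μ = 0)
    (C : Matrix (Fin n) (Fin n) ℝ)
    (hC : ∀ a b, C a b = ∫ ω, x ⟨0, hm⟩ ω a * x ⟨0, hm⟩ ω b ∂μ)
    (hL4 : Integrable (fun ω => (∑ a, x ⟨0, hm⟩ ω a ^ 2) ^ 2) μ)
    (Chat : Ω → Matrix (Fin n) (Fin n) ℝ)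
    (hChat : ∀ ω, Chat ω = (m : ℝ)⁻¹ • ∑ p, vecMulVec (x p ω) (x p ω))
    (uhat : Fin n → Ω → Fin n → ℝ) (lamhat : Fin n → Ω → ℝ)
    (huhatmeas : ∀ k, Measurable (uhat k))
    (hlamhatmeas : ∀ k, Measurable (lamhat k))
    (huhatortho : ∀ ω k l, ∑ a, uhat k ω a * uhat l ω a = if k = l then 1 else 0)
    (huhateig : ∀ ω k, (Chat ω).mulVec (uhat k ω) = lamhat k ω • uhat k ω)
    (hlamhatmono : ∀ ω, Antitone (fun k => lamhat k ω))
    (ui : Fin n → ℝ) (lami : ℝ) (hlami : 0 < lami)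
    (hui : ∑ a, ui a ^ 2 = 1) (hCui : C.mulVec ui = lami • ui)
    (ki : ℝ)
    (hki : ki = Real.sqrt
      ((∫ ω, ∑ a, ((vecMulVec (x ⟨0, hm⟩ ω) (x ⟨0, hm⟩ ω)).mulVec ui a) ^ 2 ∂μ)
        - lami ^ 2))
    (t : ℝ) (ht : 0 < t) :
    (μ {ω | t * lami ≤ Finset.univ.inf' (Finset.univ_nonempty_iff.mpr ⟨⟨0, hn⟩⟩)
              (fun k => |lamhat k ω - lami|)}).toReal
      ≤ (m : ℝ)⁻¹ * (ki / (lami * t)) ^ 2 :=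
  eigenvalue_concentration_general μ hm hn x hmeas hindep hident C hC hL4 Chat hChat uhat lamhat
    huhatortho huhateig ui lami hlami hui hCui ki hki t ht
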